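/- Let n ≥ 1. The Boolean reflection monoid of type B, namely the set M(W(B_n), B) of partial linear isomorphisms, has cardinality Σ_{k=0}^{n} 2^k · (n choose k)^2 · k!. -/

import Mathlib

/-- The set `M(G,B)` of partial linear isomorphisms `g|_X` for `g ∈ G`, `X ∈ B`. -/
def MGB {F V : Type*} [Field F] [AddCommGroup V] [Module F V]
    (G : Set (V ≃ₗ[F] V)) (B : Set (Submodule F V)) : Set (V →ₗ.[F] V) :=
  {p | ∃ g ∈ G, ∃ X ∈ B, p = (g : V →ₗ[F] V).toPMap X}

/-- The coordinate subspace `X_S = {v : v i = 0 for i ∈ S}`. -/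
def coordSubspace {n : ℕ} (S : Set (Fin n)) : Submodule ℝ (Fin n → ℝ) where
  carrier := {v | ∀ i ∈ S, v i = 0}
  add_mem' := by
    intro a b ha hb i hi
    simp [ha i hi, hb i hi]
  zero_mem' := fun i _ => rfl
  smul_mem' := by
    intro c v hv i hi
    simp [hv i hi]

/-- The Boolean system: all coordinate subspaces `X_S`, `S ⊆ Fin n`. -/
def booleanSystem (n : ℕ) : Set (Submodule ℝ (Fin n → ℝ)) :=
  {X | ∃ S : Set (Fin n), X = coordSubspace S}

/-- The Weyl group of type `B_n`: the signed permutation maps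
`(g_{σ,ε} v) i = ε i * v (σ⁻¹ i)` with `ε i = ±1`. -/
def weylB (n : ℕ) : Set ((Fin n → ℝ) ≃ₗ[ℝ] (Fin n → ℝ)) :=
  {g | ∃ (σ : Equiv.Perm (Fin n)) (ε : Fin n → ℝ), (∀ i, ε i = 1 ∨ ε i = -1) ∧
    ∀ (v : Fin n → ℝ) (i : Fin n), g v i = ε i * v (σ⁻¹ i)}

/-! ### Auxiliary material -/

theorem Equiv.Perm.inv_apply_self {α : Type*} (f : Equiv.Perm α) (x : α) : f⁻¹ (f x) = x :=
  f.symm_apply_apply x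

theorem Equiv.Perm.apply_inv_self {α : Type*} (f : Equiv.Perm α) (x : α) : f (f⁻¹ x) = x :=
  f.apply_symm_apply x

lemma mem_coordSubspace {n : ℕ} {S : Set (Fin n)} {v : Fin n → ℝ} :
    v ∈ coordSubspace S ↔ ∀ i ∈ S, v i = 0 := Iff.rfl

lemma single_mem_coordSubspace_iff {n : ℕ} {S : Set (Fin n)} {i : Fin n} :
    (Pi.single i (1:ℝ)) ∈ coordSubspace S ↔ i ∉ S := by
  constructor
  · intro h hi
    have := h i hi
    rw [Pi.single_eq_same] at this
    exact one_ne_zero this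
  · intro hi j hj
    have hne : j ≠ i := fun e => hi (e ▸ hj)
    exact Pi.single_eq_of_ne (M := fun _ => ℝ) hne 1

lemma coordSubspace_injective {n : ℕ} : Function.Injective (coordSubspace (n := n)) := by
  intro A B h
  ext i
  have hA := single_mem_coordSubspace_iff (S := A) (i := i)
  have hB := single_mem_coordSubspace_iff (S := B) (i := i)
  rw [h] at hA
  constructor
  · intro hi
    by_contra hB'
    exact (hA.mp (hB.mpr hB')) hi
  · intro hi
    by_contra hA'
    exact (hB.mp (hA.mpr hA')) hi

open Finset in
/-- Any map injective on a set extends to a permutation of `Fin n`. -/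
lemma exists_perm_extend {n : ℕ} (s : Set (Fin n)) (f : Fin n → Fin n) (hf : Set.InjOn f s) :
    ∃ σ : Equiv.Perm (Fin n), ∀ x ∈ s, σ x = f x := by
  classical
  have hb : Set.BijOn f s (f '' s) := hf.bijOn_image
  let g1 : s ≃ (f '' s : Set (Fin n)) := hb.equiv f
  have hcard : Fintype.card (sᶜ : Set (Fin n)) = Fintype.card ((f '' s)ᶜ : Set (Fin n)) := by
    rw [Fintype.card_compl_set, Fintype.card_compl_set]
    congr 1
    exact Fintype.card_congr g1
  let g2 : (sᶜ : Set (Fin n)) ≃ ((f '' s)ᶜ : Set (Fin n)) := Fintype.equivOfCardEq hcard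
  refine ⟨(Equiv.Set.sumCompl s).symm.trans ((g1.sumCongr g2).trans (Equiv.Set.sumCompl _)), ?_⟩
  intro x hx
  simp only [Equiv.trans_apply, Equiv.Set.sumCompl_symm_apply_of_mem hx, Equiv.sumCongr_apply,
    Sum.map_inl, Equiv.Set.sumCompl_apply_inl]
  rfl

/-- The signed permutation linear equivalence `g_{σ,ε}`. -/
noncomputable def signedPerm {n : ℕ} (σ : Equiv.Perm (Fin n)) (ε : Fin n → ℝ)
    (hε : ∀ i, ε i = 1 ∨ ε i = -1) : (Fin n → ℝ) ≃ₗ[ℝ] (Fin n → ℝ) where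
  toFun v := fun i => ε i * v (σ⁻¹ i)
  map_add' v w := by funext i; simp [mul_add]
  map_smul' c v := by funext i; simp [Pi.smul_apply, smul_eq_mul]; ring
  invFun w := fun j => ε (σ j) * w (σ j)
  left_inv v := by
    funext j
    have h2 : ε (σ j) * ε (σ j) = 1 := by rcases hε (σ j) with h | h <;> rw [h] <;> norm_num
    simp only [Equiv.Perm.inv_apply_self, ← mul_assoc, h2, one_mul]
  right_inv w := by
    funext i
    have h2 : ε i * ε i = 1 := by rcases hε i with h | h <;> rw [h] <;> norm_num
    simp only [Equiv.Perm.apply_inv_self, ← mul_assoc, h2, one_mul]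

lemma signedPerm_mem {n : ℕ} (σ : Equiv.Perm (Fin n)) (ε : Fin n → ℝ)
    (hε : ∀ i, ε i = 1 ∨ ε i = -1) : signedPerm σ ε hε ∈ weylB n :=
  ⟨σ, ε, hε, fun _ _ => rfl⟩

lemma signedPerm_apply {n : ℕ} (σ : Equiv.Perm (Fin n)) (ε : Fin n → ℝ)
    (hε : ∀ i, ε i = 1 ∨ ε i = -1) (v : Fin n → ℝ) (i : Fin n) :
    signedPerm σ ε hε v i = ε i * v (σ⁻¹ i) := rfl

/-- The combinatorial data indexing the Boolean reflection monoid of type `B`. -/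
abbrev BData (n : ℕ) : Type :=
  (S : Finset (Fin n)) × (({x // x ∈ Sᶜ} ↪ Fin n) × ({x // x ∈ Sᶜ} → Bool))

/-- The extension of the embedding `f` to a function on `Fin n`. -/
def fhat {n : ℕ} (S : Finset (Fin n)) (f : {x // x ∈ Sᶜ} ↪ Fin n) : Fin n → Fin n :=
  fun x => if h : x ∈ Sᶜ then f ⟨x, h⟩ else x

lemma fhat_injOn {n : ℕ} (S : Finset (Fin n)) (f : {x // x ∈ Sᶜ} ↪ Fin n) :
    Set.InjOn (fhat S f) (↑(Sᶜ) : Set (Fin n)) := by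
  intro a ha b hb hab
  rw [Finset.mem_coe] at ha hb
  rw [fhat, fhat, dif_pos ha, dif_pos hb] at hab
  exact congrArg Subtype.val (f.injective hab)

/-- A permutation extending the embedding `f`. -/
noncomputable def extPerm {n : ℕ} (S : Finset (Fin n)) (f : {x // x ∈ Sᶜ} ↪ Fin n) :
    Equiv.Perm (Fin n) :=
  Classical.choose (exists_perm_extend (↑(Sᶜ) : Set (Fin n)) (fhat S f) (fhat_injOn S f))

lemma extPerm_spec {n : ℕ} (S : Finset (Fin n)) (f : {x // x ∈ Sᶜ} ↪ Fin n)
    {x : Fin n} (hx : x ∈ Sᶜ) : extPerm S f x = f ⟨x, hx⟩ := by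
  have h := Classical.choose_spec
    (exists_perm_extend (↑(Sᶜ) : Set (Fin n)) (fhat S f) (fhat_injOn S f)) x
    (Finset.mem_coe.mpr hx)
  unfold extPerm
  rw [h, fhat, dif_pos hx]

/-- The sign function determined by the boolean data `b`. -/
def epsOf {n : ℕ} (S : Finset (Fin n)) (b : {x // x ∈ Sᶜ} → Bool) : Fin n → ℝ :=
  fun j => if h : j ∈ Sᶜ then (if b ⟨j, h⟩ then 1 else -1) else 1

lemma epsOf_cases {n : ℕ} (S : Finset (Fin n)) (b : {x // x ∈ Sᶜ} → Bool) (j : Fin n) :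
    epsOf S b j = 1 ∨ epsOf S b j = -1 := by
  rw [epsOf]
  split_ifs <;> simp

/-- The map from combinatorial data to partial linear isomorphisms. -/
noncomputable def phiB {n : ℕ} (x : BData n) : (Fin n → ℝ) →ₗ.[ℝ] (Fin n → ℝ) :=
  ((signedPerm (extPerm x.1 x.2.1) (fun i => epsOf x.1 x.2.2 ((extPerm x.1 x.2.1)⁻¹ i))
      (fun i => epsOf_cases _ _ _) : (Fin n → ℝ) ≃ₗ[ℝ] (Fin n → ℝ)) :
      (Fin n → ℝ) →ₗ[ℝ] (Fin n → ℝ)).toPMap (coordSubspace (↑x.1 : Set (Fin n)))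

lemma pmap_congr {V : Type*} [AddCommGroup V] [Module ℝ V]
    {p q : V →ₗ.[ℝ] V} (h : p = q) {v : V} (hv : v ∈ p.domain) (hv' : v ∈ q.domain) :
    p ⟨v, hv⟩ = q ⟨v, hv'⟩ := by subst h; rfl

lemma phiB_mem {n : ℕ} (x : BData n) : phiB x ∈ MGB (weylB n) (booleanSystem n) :=
  ⟨_, signedPerm_mem _ _ _, _, ⟨(↑x.1 : Set (Fin n)), rfl⟩, rfl⟩

lemma phiB_injective {n : ℕ} : Function.Injective (phiB (n := n)) := by
  classical
  rintro ⟨S, f, b⟩ ⟨S', f', b'⟩ h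
  have hdom : coordSubspace (↑S : Set (Fin n)) = coordSubspace (↑S' : Set (Fin n)) :=
    congrArg LinearPMap.domain h
  have hSS : S = S' := Finset.coe_injective (coordSubspace_injective hdom)
  subst hSS
  -- now compare values on basis vectors
  have key : ∀ (j : Fin n) (hj : j ∈ Sᶜ), f ⟨j, hj⟩ = f' ⟨j, hj⟩ ∧ b ⟨j, hj⟩ = b' ⟨j, hj⟩ := by
    intro j hj
    have hjS : j ∉ S := Finset.mem_compl.mp hj
    have hmem : (Pi.single j (1:ℝ)) ∈ coordSubspace (↑S : Set (Fin n)) :=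
      single_mem_coordSubspace_iff.mpr (by simpa using hjS)
    set σ := extPerm S f with hσ
    set σ' := extPerm S f' with hσ'
    have hv := pmap_congr h (v := Pi.single j (1:ℝ)) hmem hmem
    have hv' : ∀ i : Fin n,
        epsOf S b (σ⁻¹ i) * (Pi.single j (1:ℝ) : Fin n → ℝ) (σ⁻¹ i) =
        epsOf S b' (σ'⁻¹ i) * (Pi.single j (1:ℝ) : Fin n → ℝ) (σ'⁻¹ i) := by
      intro i
      have := congrFun hv i
      simpa [phiB, LinearMap.toPMap_apply, signedPerm_apply] using this
    -- evaluate at i = σ j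
    have hσj : σ j = f ⟨j, hj⟩ := extPerm_spec S f hj
    have hσ'j : σ' j = f' ⟨j, hj⟩ := extPerm_spec S f' hj
    have h1 := hv' (σ j)
    rw [Equiv.Perm.inv_apply_self, Pi.single_eq_same, mul_one] at h1
    have hne : epsOf S b j ≠ 0 := by
      rcases epsOf_cases S b j with h' | h' <;> rw [h'] <;> norm_num
    have hjj : σ'⁻¹ (σ j) = j := by
      by_contra hc
      rw [Pi.single_eq_of_ne (M := fun _ => ℝ) hc 1, mul_zero] at h1
      exact hne h1
    have hff : σ' j = σ j := by
      conv_lhs => rw [← hjj]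
      exact Equiv.Perm.apply_inv_self σ' (σ j)
    have hbb : epsOf S b j = epsOf S b' j := by
      rw [h1, hjj, Pi.single_eq_same, mul_one]
    refine ⟨by rw [← hσj, ← hσ'j, hff], ?_⟩
    rw [epsOf, epsOf, dif_pos hj, dif_pos hj] at hbb
    rcases Bool.eq_false_or_eq_true (b ⟨j, hj⟩) with hb1 | hb1 <;>
      rcases Bool.eq_false_or_eq_true (b' ⟨j, hj⟩) with hb2 | hb2 <;>
      simp [hb1, hb2] at hbb ⊢ <;> norm_num at hbb
  have hf : f = f' := by
    ext ⟨j, hj⟩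
    exact congrArg Fin.val (key j hj).1
  have hb : b = b' := by
    funext ⟨j, hj⟩
    exact (key j hj).2
  rw [hf, hb]

lemma phiB_surjective {n : ℕ} :
    ∀ p ∈ MGB (weylB n) (booleanSystem n), ∃ x : BData n, phiB x = p := by
  classical
  rintro p ⟨g, ⟨σ, ε, hε, hg⟩, X, ⟨Sset, rfl⟩, rfl⟩
  set S : Finset (Fin n) := (Set.toFinite Sset).toFinset with hSdef
  have hS : (↑S : Set (Fin n)) = Sset := Set.Finite.coe_toFinset _
  let f : {x // x ∈ Sᶜ} ↪ Fin n :=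
    ⟨fun j => σ j, fun a b hab => Subtype.ext (σ.injective (by exact hab))⟩
  let b : {x // x ∈ Sᶜ} → Bool := fun j => decide (ε (σ j) = 1)
  refine ⟨⟨S, f, b⟩, ?_⟩
  set σ1 := extPerm S f with hσ1
  -- pointwise agreement on the domain
  have hpt : ∀ v ∈ coordSubspace (↑S : Set (Fin n)), ∀ i : Fin n,
      epsOf S b (σ1⁻¹ i) * v (σ1⁻¹ i) = ε i * v (σ⁻¹ i) := by
    intro v hv i
    by_cases hj : σ⁻¹ i ∈ Sᶜ
    · have h1 : σ1 (σ⁻¹ i) = σ (σ⁻¹ i) := extPerm_spec S f hj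
      rw [Equiv.Perm.apply_inv_self] at h1
      have h2 : σ1⁻¹ i = σ⁻¹ i := Equiv.Perm.inv_eq_iff_eq.mpr h1.symm
      rw [h2]
      congr 1
      rw [epsOf, dif_pos hj]
      have hb : b ⟨σ⁻¹ i, hj⟩ = decide (ε (σ (σ⁻¹ i)) = 1) := rfl
      rw [Equiv.Perm.apply_inv_self σ i] at hb
      rcases hε i with h' | h'
      · rw [hb, h']; simp
      · have hne : ¬ (ε i = 1) := by rw [h']; norm_num
        simp only [hb, h', decide_eq_true_eq]
        rw [if_neg (by norm_num)]
    · -- both indices are in S, so v vanishes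
      have hjS : σ⁻¹ i ∈ S := by
        by_contra hc
        exact hj (Finset.mem_compl.mpr hc)
      have hv1 : v (σ⁻¹ i) = 0 := hv _ (Finset.mem_coe.mpr hjS)
      have hj1 : σ1⁻¹ i ∈ S := by
        by_contra hc
        have hc' : σ1⁻¹ i ∈ Sᶜ := Finset.mem_compl.mpr hc
        have h1 : σ1 (σ1⁻¹ i) = σ (σ1⁻¹ i) := extPerm_spec S f hc'
        rw [Equiv.Perm.apply_inv_self] at h1
        have hinv : σ1⁻¹ i = σ⁻¹ i := (Equiv.Perm.inv_eq_iff_eq.mpr h1).symm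
        rw [hinv] at hc'
        exact hj hc'
      have hv2 : v (σ1⁻¹ i) = 0 := hv _ (Finset.mem_coe.mpr hj1)
      rw [hv1, hv2, mul_zero, mul_zero]
  -- conclude equality of partial maps
  have hdom : coordSubspace (↑S : Set (Fin n)) = coordSubspace Sset := by rw [hS]
  apply LinearPMap.ext hdom
  intro v hv hw
  have hv' : v ∈ coordSubspace (↑S : Set (Fin n)) := by rw [hdom]; exact hw
  funext i
  simp only [phiB, LinearMap.toPMap_apply]
  exact (hpt v hv' i).trans (hg v i).symm

lemma card_BData (n : ℕ) :
    Nat.card (BData n) =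
      ∑ k ∈ Finset.range (n + 1), 2 ^ k * (n.choose k) ^ 2 * k.factorial := by
  classical
  rw [Nat.card_eq_fintype_card]
  rw [Fintype.card_sigma]
  have hterm : ∀ S : Finset (Fin n),
      Fintype.card (({x // x ∈ Sᶜ} ↪ Fin n) × ({x // x ∈ Sᶜ} → Bool)) =
        n.descFactorial (Sᶜ.card) * 2 ^ (Sᶜ.card) := by
    intro S
    rw [Fintype.card_prod, Fintype.card_embedding_eq, Fintype.card_fun, Fintype.card_coe,
      Fintype.card_fin, Fintype.card_bool]
  rw [Finset.sum_congr rfl (fun S _ => hterm S)]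
  have hswap : ∑ S : Finset (Fin n), n.descFactorial (Sᶜ.card) * 2 ^ (Sᶜ.card) =
      ∑ S : Finset (Fin n), n.descFactorial (S.card) * 2 ^ (S.card) :=
    Fintype.sum_equiv (Function.Involutive.toPerm _ compl_involutive) _ _ (fun S => rfl)
  rw [hswap]
  rw [← Finset.powerset_univ, Finset.sum_powerset]
  rw [Finset.card_univ, Fintype.card_fin]
  refine Finset.sum_congr rfl (fun k hk => ?_)
  rw [show (∑ t ∈ Finset.powersetCard k (Finset.univ : Finset (Fin n)),
        n.descFactorial t.card * 2 ^ t.card) =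
      ∑ t ∈ Finset.powersetCard k (Finset.univ : Finset (Fin n)),
        (fun m => n.descFactorial m * 2 ^ m) t.card from rfl]
  rw [Finset.sum_powersetCard k Finset.univ (fun m => n.descFactorial m * 2 ^ m)]
  rw [Finset.card_univ, Fintype.card_fin, smul_eq_mul, Nat.descFactorial_eq_factorial_mul_choose]
  ring

/-- The Boolean reflection monoid of type `B_n` has order
`∑_{k=0}^n 2^k (n choose k)² k!`. -/
theorem card_boolean_monoid_B (n : ℕ) (hn : 1 ≤ n) :
    Nat.card (MGB (weylB n) (booleanSystem n)) =
      ∑ k ∈ Finset.range (n + 1), 2 ^ k * (n.choose k) ^ 2 * k.factorial := by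
  classical
  have hbij : Function.Bijective
      (fun x : BData n => (⟨phiB x, phiB_mem x⟩ : MGB (weylB n) (booleanSystem n))) := by
    constructor
    · intro a b hab
      exact phiB_injective (Subtype.ext_iff.mp hab)
    · rintro ⟨p, hp⟩
      obtain ⟨x, hx⟩ := phiB_surjective p hp
      exact ⟨x, Subtype.ext hx⟩
  rw [← Nat.card_eq_of_bijective _ hbij]
  exact card_BData n
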